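/- arXiv:2111.05073 — 3 statements merged into one kernel-verified Lean document; each statement's English description precedes it below -/
import Mathlib

section
/- Let K ≥ 2, γ > 0, v : Fin K → ℝ and y ∈ Fin K. Then 1 − φ_γ(v, y) ≥ σ( (max_{k ≠ y} v_k − v_y)/γ ), where the maximum is over the (nonempty) set of indices k ≠ y and σ(t) = 1/(1 + exp(−t)). -/
/-- Tempered softmax: `φ_γ(v, y) = exp(v y / γ) / ∑ k, exp(v k / γ)`. -/
noncomputable def softmaxTemp {K : ℕ} (γ : ℝ) (v : Fin K → ℝ) (y : Fin K) : ℝ :=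
  Real.exp (v y / γ) / ∑ k, Real.exp (v k / γ)

/-- Sigmoid function `σ(t) = 1 / (1 + exp (−t))`. -/
noncomputable def sigmoid (t : ℝ) : ℝ := 1 / (1 + Real.exp (-t))

theorem stmt1 {K : ℕ} (hK : 2 ≤ K) (γ : ℝ) (hγ : 0 < γ) (v : Fin K → ℝ) (y : Fin K)
    (hne : (Finset.univ.erase y).Nonempty) :
    sigmoid (((Finset.univ.erase y).sup' hne v - v y) / γ) ≤ 1 - softmaxTemp γ v y := by
  set M := (Finset.univ.erase y).sup' hne v with hM
  set T := ∑ k ∈ Finset.univ.erase y, Real.exp (v k / γ) with hT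
  have hTpos : 0 < T := Finset.sum_pos (fun k _ => Real.exp_pos _) hne
  have hey : 0 < Real.exp (v y / γ) := Real.exp_pos _
  have heM : 0 < Real.exp (M / γ) := Real.exp_pos _
  -- exp(M/γ) ≤ T
  obtain ⟨k, hk, hkM⟩ := Finset.exists_mem_eq_sup' hne v
  have hMT : Real.exp (M / γ) ≤ T := by
    rw [hM, hkM, hT]
    exact Finset.single_le_sum (f := fun i => Real.exp (v i / γ)) (fun i _ => (Real.exp_pos _).le) hk
  -- sum splits
  have hsum : (∑ k, Real.exp (v k / γ)) = T + Real.exp (v y / γ) := by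
    rw [hT, Finset.sum_erase_add _ _ (Finset.mem_univ y)]
  -- rewrite sigmoid
  have hsig : sigmoid ((M - v y) / γ) = Real.exp (M / γ) / (Real.exp (M / γ) + Real.exp (v y / γ)) := by
    rw [sigmoid]
    rw [div_eq_div_iff (by positivity) (by positivity)]
    have : Real.exp (-((M - v y) / γ)) = Real.exp (v y / γ) / Real.exp (M / γ) := by
      rw [← Real.exp_sub]; ring_nf
    rw [this]
    field_simp

  rw [hsig, softmaxTemp, hsum]
  have h1 : 1 - Real.exp (v y / γ) / (T + Real.exp (v y / γ)) = T / (T + Real.exp (v y / γ)) := by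
    field_simp
    ring
  rw [h1]
  rw [div_le_div_iff₀ (by positivity) (by positivity)]
  nlinarith [mul_le_mul_of_nonneg_right hMT hey.le]
end

section
/- Let d ≥ 1, θ ∈ ℝ^d, and for i = 1, …, n let x_i ∈ ℝ^d, y_i ∈ {0, 1}, y_i* ∈ ℝ, and set σ_i = σ(⟨θ, x_i⟩) with σ(t) = 1/(1+exp(−t)). Let α, β, c, R, m, ε ≥ 0. Assume for every i: (2y_i − 1)·⟨θ, x_i⟩ ≥ 0; |y_i* − σ_i| ≤ β·|y_i − σ_i|; ‖x_i‖₂ ≥ c·√d; and |⟨θ, x_i⟩| ≥ R·‖θ‖₂·‖x_i‖₂. Assume also αβ ≤ 1 and ε·(1 + αβ) ≤ (1 − αβ)·c·R·m. Then (1/n) ∑_{i=1}^n sup_{‖δ‖₂ ≤ ε√d} (σ_i − y_i)·⟨θ, δ⟩ + (α/n) ∑_{i=1}^n sup_{‖δ‖₂ ≤ ε√d} (σ_i − y_i*)·⟨θ, δ⟩ ≤ m · (1/n) ∑_{i=1}^n ( y_i + α·y_i* − (1+α)·σ_i )·⟨θ, x_i⟩. -/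
set_option maxHeartbeats 800000

open RealInnerProductSpace

lemma sigmoid_pos (t : ℝ) : 0 < sigmoid t := by
  unfold sigmoid; positivity

lemma sigmoid_lt_one (t : ℝ) : sigmoid t < 1 := by
  unfold sigmoid
  rw [div_lt_one (by positivity)]
  linarith [Real.exp_pos (-t)]

lemma sup_lin {d : ℕ} (θ : EuclideanSpace ℝ (Fin d)) (a M : ℝ) (hM : 0 ≤ M) :
    sSup {r : ℝ | ∃ δ : EuclideanSpace ℝ (Fin d), ‖δ‖ ≤ M ∧ r = a * ⟪θ, δ⟫}
      = |a| * ‖θ‖ * M := by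
  apply IsGreatest.csSup_eq
  constructor
  · by_cases hθ : θ = 0
    · refine ⟨0, by simpa using hM, ?_⟩
      simp [hθ]
    · refine ⟨((if 0 ≤ a then (1:ℝ) else -1) * M / ‖θ‖) • θ, ?_, ?_⟩
      · have hθ' : (0:ℝ) < ‖θ‖ := norm_pos_iff.mpr hθ
        rw [norm_smul, Real.norm_eq_abs, abs_div, abs_mul, abs_of_nonneg hM,
          abs_of_pos hθ', div_mul_cancel₀ _ hθ'.ne']
        rcases le_or_gt 0 a with h | h
        · rw [if_pos h]; simp
        · rw [if_neg (not_le.mpr h)]; simp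
      · rw [real_inner_smul_right, real_inner_self_eq_norm_sq]
        have hθ' : (0:ℝ) < ‖θ‖ := norm_pos_iff.mpr hθ
        rcases le_or_gt 0 a with h | h
        · rw [if_pos h, abs_of_nonneg h]; field_simp
        · rw [if_neg (not_le.mpr h), abs_of_neg h]; field_simp
  · rintro r ⟨δ, hδ, rfl⟩
    calc a * ⟪θ, δ⟫ ≤ |a * ⟪θ, δ⟫| := le_abs_self _
      _ = |a| * |⟪θ, δ⟫| := abs_mul _ _
      _ ≤ |a| * (‖θ‖ * ‖δ‖) :=
          mul_le_mul_of_nonneg_left (abs_real_inner_le_norm θ δ) (abs_nonneg a)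
      _ ≤ |a| * (‖θ‖ * M) :=
          mul_le_mul_of_nonneg_left (mul_le_mul_of_nonneg_left hδ (norm_nonneg θ)) (abs_nonneg a)
      _ = |a| * ‖θ‖ * M := by ring

theorem stmt16 {d n : ℕ} (hd : 1 ≤ d) (θ : EuclideanSpace ℝ (Fin d))
    (x : Fin n → EuclideanSpace ℝ (Fin d)) (y ystar : Fin n → ℝ)
    (α β c R m ε : ℝ) (hα : 0 ≤ α) (hβ : 0 ≤ β) (hc : 0 ≤ c) (hR : 0 ≤ R)
    (hm : 0 ≤ m) (hε : 0 ≤ ε)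
    (hy : ∀ i, y i = 0 ∨ y i = 1)
    (hsign : ∀ i, 0 ≤ (2 * y i - 1) * ⟪θ, x i⟫)
    (hteach : ∀ i, |ystar i - sigmoid ⟪θ, x i⟫| ≤ β * |y i - sigmoid ⟪θ, x i⟫|)
    (hnorm : ∀ i, c * Real.sqrt d ≤ ‖x i‖)
    (hcos : ∀ i, R * ‖θ‖ * ‖x i‖ ≤ |⟪θ, x i⟫|)
    (hαβ : α * β ≤ 1)
    (hεb : ε * (1 + α * β) ≤ (1 - α * β) * c * R * m) :
    (1 / (n : ℝ)) * ∑ i, sSup {r : ℝ | ∃ δ : EuclideanSpace ℝ (Fin d),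
        ‖δ‖ ≤ ε * Real.sqrt d ∧ r = (sigmoid ⟪θ, x i⟫ - y i) * ⟪θ, δ⟫} +
      (α / (n : ℝ)) * ∑ i, sSup {r : ℝ | ∃ δ : EuclideanSpace ℝ (Fin d),
        ‖δ‖ ≤ ε * Real.sqrt d ∧ r = (sigmoid ⟪θ, x i⟫ - ystar i) * ⟪θ, δ⟫} ≤
      m * ((1 / (n : ℝ)) *
        ∑ i, (y i + α * ystar i - (1 + α) * sigmoid ⟪θ, x i⟫) * ⟪θ, x i⟫) := by
  have hM : 0 ≤ ε * Real.sqrt d := by positivity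
  have hrw1 : ∀ i : Fin n, sSup {r : ℝ | ∃ δ : EuclideanSpace ℝ (Fin d),
      ‖δ‖ ≤ ε * Real.sqrt d ∧ r = (sigmoid ⟪θ, x i⟫ - y i) * ⟪θ, δ⟫}
      = |sigmoid ⟪θ, x i⟫ - y i| * ‖θ‖ * (ε * Real.sqrt d) := fun i => sup_lin θ _ _ hM
  have hrw2 : ∀ i : Fin n, sSup {r : ℝ | ∃ δ : EuclideanSpace ℝ (Fin d),
      ‖δ‖ ≤ ε * Real.sqrt d ∧ r = (sigmoid ⟪θ, x i⟫ - ystar i) * ⟪θ, δ⟫}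
      = |sigmoid ⟪θ, x i⟫ - ystar i| * ‖θ‖ * (ε * Real.sqrt d) := fun i => sup_lin θ _ _ hM
  simp only [hrw1, hrw2]
  -- per-index inequality
  have key : ∀ i : Fin n,
      |sigmoid ⟪θ, x i⟫ - y i| * ‖θ‖ * (ε * Real.sqrt d) +
        α * (|sigmoid ⟪θ, x i⟫ - ystar i| * ‖θ‖ * (ε * Real.sqrt d)) ≤
      m * ((y i + α * ystar i - (1 + α) * sigmoid ⟪θ, x i⟫) * ⟪θ, x i⟫) := by
    intro i
    set t := ⟪θ, x i⟫ with ht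
    set s := sigmoid t with hs
    have hs0 := sigmoid_pos t
    have hs1 := sigmoid_lt_one t
    have hA : 0 ≤ |y i - s| := abs_nonneg _
    have hT : c * R * ‖θ‖ * Real.sqrt d ≤ |t| := by
      calc c * R * ‖θ‖ * Real.sqrt d = R * ‖θ‖ * (c * Real.sqrt d) := by ring
        _ ≤ R * ‖θ‖ * ‖x i‖ := mul_le_mul_of_nonneg_left (hnorm i) (by positivity)
        _ ≤ |t| := hcos i
    have hsgn : (y i - s) * t = |y i - s| * |t| := by
      rcases hy i with h0 | h1
      · have : t ≤ 0 := by nlinarith [hsign i]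
        rw [h0, abs_of_nonpos this, abs_of_nonpos (by linarith : (0:ℝ) - s ≤ 0)]
        ring
      · have : 0 ≤ t := by nlinarith [hsign i]
        rw [h1, abs_of_nonneg this, abs_of_nonneg (by linarith : (0:ℝ) ≤ 1 - s)]
    have hteach' : |s - ystar i| ≤ β * |y i - s| := by
      rw [abs_sub_comm]; simpa [abs_sub_comm (y i)] using hteach i
    have hyst : -(β * |y i - s|) * |t| ≤ (ystar i - s) * t := by
      have h1 : -(|s - ystar i| * |t|) ≤ (ystar i - s) * t := by
        have := neg_abs_le ((ystar i - s) * t)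
        rw [abs_mul, abs_sub_comm (ystar i) s] at this
        exact this
      have h2 : -(β * |y i - s|) * |t| ≤ -(|s - ystar i| * |t|) := by
        have := mul_le_mul_of_nonneg_right hteach' (abs_nonneg t)
        linarith
      linarith
    have hrhs : m * ((1 - α * β) * |y i - s| * |t|) ≤
        m * ((y i + α * ystar i - (1 + α) * s) * t) := by
      apply mul_le_mul_of_nonneg_left _ hm
      have : (y i + α * ystar i - (1 + α) * s) * t
          = (y i - s) * t + α * ((ystar i - s) * t) := by ring
      rw [this, hsgn]
      nlinarith [mul_le_mul_of_nonneg_left hyst hα]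
    -- left side bound
    have habs : |s - y i| = |y i - s| := abs_sub_comm _ _
    have hlhs : |s - y i| * ‖θ‖ * (ε * Real.sqrt d) +
        α * (|s - ystar i| * ‖θ‖ * (ε * Real.sqrt d)) ≤
        (1 + α * β) * |y i - s| * ‖θ‖ * (ε * Real.sqrt d) := by
      rw [habs]
      have h2 : |s - ystar i| * ‖θ‖ * (ε * Real.sqrt d) ≤
          β * |y i - s| * ‖θ‖ * (ε * Real.sqrt d) := by
        have : 0 ≤ ‖θ‖ * (ε * Real.sqrt d) := by positivity
        nlinarith
      nlinarith [mul_le_mul_of_nonneg_left h2 hα]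
    refine le_trans hlhs (le_trans ?_ hrhs)
    -- (1+αβ)|y-s| ‖θ‖ ε√d ≤ m(1-αβ)|y-s||t|
    have hθd : 0 ≤ |y i - s| * ‖θ‖ * Real.sqrt d := by positivity
    have step1 : (1 + α * β) * |y i - s| * ‖θ‖ * (ε * Real.sqrt d) ≤
        ((1 - α * β) * c * R * m) * (|y i - s| * ‖θ‖ * Real.sqrt d) := by
      have := mul_le_mul_of_nonneg_right hεb hθd
      nlinarith
    refine le_trans step1 ?_
    have hmαβ : 0 ≤ (1 - α * β) * m := by
      have : 0 ≤ 1 - α * β := by linarith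
      positivity
    have := mul_le_mul_of_nonneg_left hT (mul_nonneg hmαβ hA)
    nlinarith
  -- combine the sums
  have hn : (0:ℝ) ≤ 1 / (n : ℝ) := by positivity
  calc (1 / (n : ℝ)) * ∑ i, |sigmoid ⟪θ, x i⟫ - y i| * ‖θ‖ * (ε * Real.sqrt d) +
      (α / (n : ℝ)) * ∑ i, |sigmoid ⟪θ, x i⟫ - ystar i| * ‖θ‖ * (ε * Real.sqrt d)
      = (1 / (n : ℝ)) * ∑ i, (|sigmoid ⟪θ, x i⟫ - y i| * ‖θ‖ * (ε * Real.sqrt d) +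
          α * (|sigmoid ⟪θ, x i⟫ - ystar i| * ‖θ‖ * (ε * Real.sqrt d))) := by
        rw [Finset.sum_add_distrib, ← Finset.mul_sum]
        ring
    _ ≤ (1 / (n : ℝ)) * ∑ i, m * ((y i + α * ystar i - (1 + α) * sigmoid ⟪θ, x i⟫) * ⟪θ, x i⟫) := by
        apply mul_le_mul_of_nonneg_left _ hn
        exact Finset.sum_le_sum fun i _ => key i
    _ = m * ((1 / (n : ℝ)) *
        ∑ i, (y i + α * ystar i - (1 + α) * sigmoid ⟪θ, x i⟫) * ⟪θ, x i⟫) := by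
        rw [← Finset.mul_sum]; ring
end

section
/- (Theorem 4.2, second-order surrogate form.) Let d ≥ 1, θ ∈ ℝ^d, θ ≠ 0, and let (x_i, y_i)_{i=1}^n with x_i ∈ ℝ^d, y_i ∈ {0,1}, teacher labels y_i* ∈ ℝ, and σ_i = σ(⟨θ, x_i⟩), a_i = σ_i(1−σ_i). Let α ∈ (0, 1], β ≥ 0 with αβ < 1, c_x > 0, and suppose: ∑_{i=1}^n x_i = 0; for all i, (2y_i − 1)⟨θ, x_i⟩ ≥ 0, |y_i* − σ_i| ≤ β|y_i − σ_i|, and ‖x_i‖₂ ≥ c_x√d. Let R = min_i |⟨θ, x_i⟩|/(‖θ‖₂‖x_i‖₂), let P̃ = (α/(α+β))Beta(α+1, β) + (β/(α+β))Beta(β+1, α), m = E_{λ∼P̃}[1−λ], M = E_{λ∼P̃}[(1−λ)²], and ε = ((1−αβ)/(1+β))·c_x·R·m. For labels z = (z_i), define the second-order adversarial surrogate Ã(z) = (1/n)∑_i [ h(⟨θ,x_i⟩) − z_i⟨θ,x_i⟩ + sup_{‖δ‖₂ ≤ ε√d}( (σ_i − z_i)⟨θ,δ⟩ + (a_i/2)⟨θ,δ⟩²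 ) ] and the second-order mixup surrogate M̃(z) = (1/n)∑_i [ h(⟨θ,x_i⟩) − z_i⟨θ,x_i⟩ ] + m·(1/n)∑_i (σ_i − z_i)·⟨θ, x̄ − x_i⟩ + M·(1/(2n))∑_i a_i·(1/n)∑_{j=1}^n ⟨θ, x_j − x_i⟩², where x̄ = (1/n)∑_j x_j and h(t) = log(1+exp(t)). Then Ã(y) + α·Ã(y*) ≤ M̃(y) + α·M̃(y*). -/
open RealInnerProductSpace

/-- Softplus function `h(t) = log (1 + exp t)`. -/
noncomputable def softplus (t : ℝ) : ℝ := Real.log (1 + Real.exp t)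

/-- The Beta function `B(a, b) = ∫₀¹ x^(a−1) (1−x)^(b−1) dx`. -/
noncomputable def betaFn (a b : ℝ) : ℝ :=
  ∫ x in (0:ℝ)..1, x ^ (a - 1) * (1 - x) ^ (b - 1)

/-- Expectation of `f` under the `Beta(a, b)` distribution on `[0, 1]`. -/
noncomputable def betaExp (a b : ℝ) (f : ℝ → ℝ) : ℝ :=
  (∫ l in (0:ℝ)..1, f l * (l ^ (a - 1) * (1 - l) ^ (b - 1))) / betaFn a b

/-- Expectation of `f` under the mixture distribution
`P̃ = (α/(α+β))·Beta(α+1, β) + (β/(α+β))·Beta(β+1, α)`. -/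
noncomputable def ptildeExp (α β : ℝ) (f : ℝ → ℝ) : ℝ :=
  (α / (α + β)) * betaExp (α + 1) β f + (β / (α + β)) * betaExp (β + 1) α f

section helpers
open MeasureTheory intervalIntegral

lemma betaIntegrable {a b : ℝ} (ha : 0 < a) (hb : 0 < b) :
    IntervalIntegrable (fun x => x ^ (a-1) * (1-x) ^ (b-1)) volume 0 1 := by
  have h := Complex.betaIntegral_convergent (u := (a:ℂ)) (v := (b:ℂ)) (by simpa) (by simpa)
  have h2 : IntervalIntegrable (fun x : ℝ => ((x:ℂ) ^ ((a:ℂ)-1) * (1-(x:ℂ)) ^ ((b:ℂ)-1)).re) volume 0 1 :=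
    ⟨h.1.re, h.2.re⟩
  apply h2.congr
  intro t ht; beta_reduce
  rw [Set.uIoc_of_le (by norm_num : (0:ℝ) ≤ 1)] at ht
  obtain ⟨ht0, ht1⟩ := ht
  rw [show ((a:ℂ)-1) = ((a-1:ℝ):ℂ) by push_cast; ring,
      show ((b:ℂ)-1) = ((b-1:ℝ):ℂ) by push_cast; ring,
      show (1-(t:ℂ)) = ((1-t:ℝ):ℂ) by push_cast; ring,
      ← Complex.ofReal_cpow ht0.le, ← Complex.ofReal_cpow (by linarith), ← Complex.ofReal_mul,
      Complex.ofReal_re]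

lemma betaFn_pos {a b : ℝ} (ha : 0 < a) (hb : 0 < b) : 0 < betaFn a b := by
  apply intervalIntegral.intervalIntegral_pos_of_pos_on (betaIntegrable ha hb)
  · intro x hx
    exact mul_pos (Real.rpow_pos_of_pos hx.1 _) (Real.rpow_pos_of_pos (by linarith [hx.2]) _)
  · norm_num

lemma rpow_shift1 {b t : ℝ} (hb : 0 < b) (ht : 0 ≤ t) :
    t * t ^ (b-1) = t ^ b := by
  rcases eq_or_lt_of_le ht with h | h
  · rw [← h, Real.zero_rpow hb.ne', zero_mul]
  · have h1 := Real.rpow_add h 1 (b-1)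
    rw [Real.rpow_one] at h1
    have e : 1 + (b-1) = b := by ring
    rw [e] at h1
    exact h1.symm

lemma rpow_shift2 {b t : ℝ} (hb : 0 < b) (ht : 0 ≤ t) :
    t^2 * t ^ (b-1) = t ^ (b+1) := by
  rcases eq_or_lt_of_le ht with h | h
  · rw [← h, Real.zero_rpow (show b+1 ≠ 0 from by positivity), zero_pow (by norm_num), zero_mul]
  · have h1 := Real.rpow_add h 2 (b-1)
    rw [show t ^ (2:ℝ) = t ^ (2:ℕ) from by rw [← Real.rpow_natCast t 2]; norm_num] at h1
    have e : 2 + (b-1) = b + 1 := by ring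
    rw [e] at h1
    exact h1.symm

lemma betaExp_jensen {a b : ℝ} (ha : 0 < a) (hb : 0 < b) :
    0 ≤ betaExp a b (fun l => 1 - l) ∧
    betaExp a b (fun l => 1 - l) ^ 2 ≤ betaExp a b (fun l => (1 - l)^2) := by
  have hB := betaFn_pos ha hb
  set B := betaFn a b with hBdef
  have hi0 := betaIntegrable ha hb
  have hi1 : IntervalIntegrable (fun l => (1-l) * (l ^ (a-1) * (1-l) ^ (b-1))) volume 0 1 := by
    apply (betaIntegrable ha (by linarith : (0:ℝ) < b + 1)).congr
    intro t ht; beta_reduce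
    rw [Set.uIoc_of_le (by norm_num : (0:ℝ) ≤ 1)] at ht
    have h1 := rpow_shift1 hb (by linarith [ht.2] : (0:ℝ) ≤ 1 - t)
    have e : b + 1 - 1 = b := by ring
    rw [e, ← h1]; ring
  have hi2 : IntervalIntegrable (fun l => (1-l)^2 * (l ^ (a-1) * (1-l) ^ (b-1))) volume 0 1 := by
    apply (betaIntegrable ha (by linarith : (0:ℝ) < b + 2)).congr
    intro t ht; beta_reduce
    rw [Set.uIoc_of_le (by norm_num : (0:ℝ) ≤ 1)] at ht
    have h1 := rpow_shift2 hb (by linarith [ht.2] : (0:ℝ) ≤ 1 - t)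
    have e : b + 2 - 1 = b + 1 := by ring
    rw [e, ← h1]; ring
  set N1 := ∫ l in (0:ℝ)..1, (1-l) * (l ^ (a-1) * (1-l) ^ (b-1)) with hN1
  set N2 := ∫ l in (0:ℝ)..1, (1-l)^2 * (l ^ (a-1) * (1-l) ^ (b-1)) with hN2
  have hN1nn : 0 ≤ N1 := by
    apply intervalIntegral.integral_nonneg (by norm_num)
    intro u hu
    have h1 : (0:ℝ) ≤ u ^ (a-1) := Real.rpow_nonneg hu.1 _
    have h2 : (0:ℝ) ≤ (1-u) ^ (b-1) := Real.rpow_nonneg (by linarith [hu.2]) _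
    have h3 : (0:ℝ) ≤ 1 - u := by linarith [hu.2]
    positivity
  have key : N1^2 ≤ N2 * B := by
    set c := N1 / B with hc
    have hnn : 0 ≤ ∫ l in (0:ℝ)..1, ((1-l) - c)^2 * (l ^ (a-1) * (1-l) ^ (b-1)) := by
      apply intervalIntegral.integral_nonneg (by norm_num)
      intro u hu
      have h1 : (0:ℝ) ≤ u ^ (a-1) := Real.rpow_nonneg hu.1 _
      have h2 : (0:ℝ) ≤ (1-u) ^ (b-1) := Real.rpow_nonneg (by linarith [hu.2]) _
      positivity
    have hexp : (∫ l in (0:ℝ)..1, ((1-l) - c)^2 * (l ^ (a-1) * (1-l) ^ (b-1)))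
        = N2 - 2*c*N1 + c^2 * B := by
      have hfe : (fun l => ((1-l) - c)^2 * (l ^ (a-1) * (1-l) ^ (b-1)))
          = fun l => (1-l)^2 * (l ^ (a-1) * (1-l) ^ (b-1))
            - (2*c) * ((1-l) * (l ^ (a-1) * (1-l) ^ (b-1)))
            + (c^2) * (l ^ (a-1) * (1-l) ^ (b-1)) := by
        funext l; ring
      rw [hfe, intervalIntegral.integral_add (hi2.sub (hi1.const_mul _)) (hi0.const_mul _),
          intervalIntegral.integral_sub hi2 (hi1.const_mul _),
          intervalIntegral.integral_const_mul, intervalIntegral.integral_const_mul]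
      have hBr : (∫ (x:ℝ) in (0:ℝ)..1, x ^ (a-1) * (1-x) ^ (b-1)) = B := rfl
      rw [hBr, ← hN1, ← hN2]
    rw [hexp] at hnn
    have h2 : c * B = N1 := div_mul_cancel₀ _ hB.ne'
    nlinarith [mul_nonneg hnn hB.le, h2]
  refine ⟨?_, ?_⟩
  · have e1 : betaExp a b (fun l => 1 - l) = N1 / B := rfl
    rw [e1]; positivity
  · have e1 : betaExp a b (fun l => 1 - l) = N1 / B := rfl
    have e2 : betaExp a b (fun l => (1 - l)^2) = N2 / B := rfl
    rw [e1, e2, div_pow]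
    rw [div_le_div_iff₀ (by positivity) hB]
    nlinarith [mul_le_mul_of_nonneg_right key hB.le]

lemma betaFn_b_zero (a : ℝ) : betaFn a 0 = 0 := by
  apply intervalIntegral.integral_undef
  intro h
  set c : ℝ := min ((1/2:ℝ) ^ (a-1)) ((3/2:ℝ) ^ (a-1)) with hc
  have hcpos : 0 < c := lt_min (Real.rpow_pos_of_pos (by norm_num) _)
    (Real.rpow_pos_of_pos (by norm_num) _)
  have hbig : (fun x : ℝ => (x - 1)⁻¹) =O[nhdsWithin 1 {(1:ℝ)}ᶜ]
      (fun x : ℝ => x ^ (a-1) * (1-x) ^ ((0:ℝ)-1)) := by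
    rw [Asymptotics.isBigO_iff]
    refine ⟨c⁻¹, ?_⟩
    filter_upwards [self_mem_nhdsWithin,
      mem_nhdsWithin_of_mem_nhds (Ioo_mem_nhds (by norm_num : (1/2:ℝ) < 1) (by norm_num : (1:ℝ) < 3/2))]
      with t ht1 ht2
    have htpos : (0:ℝ) < t := by linarith [ht2.1]
    have hrpow : t ^ (a-1) ≥ c := by
      rcases le_or_gt 0 (a-1) with hz | hz
      · exact le_trans (min_le_left _ _) (Real.rpow_le_rpow (by norm_num) ht2.1.le hz)
      · exact le_trans (min_le_right _ _) (Real.rpow_le_rpow_of_nonpos htpos ht2.2.le hz.le)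
    have hinv : (1-t) ^ ((0:ℝ)-1) = (1-t)⁻¹ := by
      rw [show (0:ℝ)-1 = ((-1:ℤ):ℝ) by norm_num, Real.rpow_intCast]
      simp
    rw [hinv]
    rw [Real.norm_eq_abs, Real.norm_eq_abs, abs_mul, abs_inv, abs_inv,
      abs_of_pos (Real.rpow_pos_of_pos htpos _), abs_sub_comm t 1]
    rw [ge_iff_le, ← sub_nonneg] at hrpow
    have h0 : (0:ℝ) ≤ |1 - t|⁻¹ := by positivity
    nlinarith [mul_nonneg (mul_nonneg (inv_nonneg.2 hcpos.le) h0) hrpow, inv_mul_cancel₀ hcpos.ne', h0]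
  exact not_intervalIntegrable_of_sub_inv_isBigO_punctured hbig (by norm_num)
    (by rw [Set.uIcc_of_le] <;> norm_num) h

lemma ptildeExp_beta_zero {α : ℝ} (f : ℝ → ℝ) : ptildeExp α 0 f = 0 := by
  unfold ptildeExp betaExp
  rw [betaFn_b_zero, div_zero, mul_zero, zero_div, zero_mul, add_zero]

lemma ptilde_facts {α β : ℝ} (hα : 0 < α) (hβ : 0 ≤ β) :
    0 ≤ ptildeExp α β (fun l => 1 - l) ∧
    ptildeExp α β (fun l => 1 - l) ^ 2 ≤ ptildeExp α β (fun l => (1 - l)^2) := by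
  rcases eq_or_lt_of_le hβ with h0 | h0
  · rw [← h0, ptildeExp_beta_zero, ptildeExp_beta_zero]
    norm_num
  · obtain ⟨h10, h1J⟩ := betaExp_jensen (a := α+1) (b := β) (by linarith) h0
    obtain ⟨h20, h2J⟩ := betaExp_jensen (a := β+1) (b := α) (by linarith) hα
    set m1 := betaExp (α+1) β (fun l => 1 - l)
    set m2 := betaExp (β+1) α (fun l => 1 - l)
    set M1 := betaExp (α+1) β (fun l => (1 - l)^2)
    set M2 := betaExp (β+1) α (fun l => (1 - l)^2)
    have hc1 : 0 ≤ α/(α+β) := by positivity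
    have hc2 : 0 ≤ β/(α+β) := by positivity
    have hsum : α/(α+β) + β/(α+β) = 1 := by field_simp
    unfold ptildeExp
    constructor
    · positivity
    · set c1 := α/(α+β)
      set c2 := β/(α+β)
      have key : (c1 * M1 + c2 * M2) - (c1 * m1 + c2 * m2)^2
          = c1*(M1-m1^2) + c2*(M2-m2^2) + c1*c2*(m1-m2)^2
            + (c1*m1^2 + c2*m2^2)*(1 - (c1+c2)) := by ring
      rw [hsum] at key
      nlinarith [mul_nonneg hc1 (sub_nonneg.2 h1J), mul_nonneg hc2 (sub_nonneg.2 h2J),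
        mul_nonneg (mul_nonneg hc1 hc2) (sq_nonneg (m1-m2)), key]


lemma sign_abs {yy s t : ℝ} (h : yy = 0 ∨ yy = 1) (h0 : 0 < s) (h1 : s < 1)
    (hs : 0 ≤ (2*yy-1)*t) : (yy - s) * t = |yy - s| * |t| := by
  rcases h with rfl | rfl
  · have ht : t ≤ 0 := by nlinarith
    rw [abs_of_nonpos (by linarith : (0:ℝ) - s ≤ 0), abs_of_nonpos ht]; ring
  · have ht : 0 ≤ t := by nlinarith
    rw [abs_of_nonneg (by linarith : (0:ℝ) ≤ 1 - s), abs_of_nonneg ht]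

lemma master_real {α β mm MM KT P T Q aa sy ss c0 : ℝ}
    (hα0 : 0 < α) (hα1 : α ≤ 1) (hβ : 0 ≤ β) (hαβ : α*β < 1)
    (hm0 : 0 ≤ mm) (hmM : mm^2 ≤ MM)
    (hc00 : 0 ≤ c0) (hc01 : c0 ≤ 1) (hc0a : c0 * (1+α*β) ≤ 1 - α*β)
    (hKT : KT = mm * c0 * P)
    (hP0 : 0 ≤ P) (hPT : P ≤ |T|) (hQT : T^2 ≤ Q) (ha : 0 ≤ aa)
    (h1 : (-sy) * T = |sy| * |T|)
    (h2 : |ss| ≤ β * |sy|) :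
    (|sy| * KT + aa/2*KT^2) + α*(|ss| *KT + aa/2*KT^2)
    ≤ mm*(sy*(-T)) + (MM/2)*(aa*Q) + α*(mm*(ss*(-T)) + (MM/2)*(aa*Q)) := by
  have hMM0 : 0 ≤ MM := le_trans (sq_nonneg mm) hmM
  have hKT0 : 0 ≤ KT := by rw [hKT]; positivity
  have hT0 : 0 ≤ |T| := abs_nonneg T
  have hg : 0 ≤ |sy| := abs_nonneg sy
  have hfo : (1+α*β) * KT ≤ mm * (1-α*β) * |T| := by
    rw [hKT]
    calc (1+α*β) * (mm * c0 * P) = (mm*P) * (c0 * (1+α*β)) := by ring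
      _ ≤ (mm*P) * (1-α*β) := mul_le_mul_of_nonneg_left hc0a (mul_nonneg hm0 hP0)
      _ = (mm * (1-α*β)) * P := by ring
      _ ≤ (mm * (1-α*β)) * |T| := mul_le_mul_of_nonneg_left hPT (by nlinarith)
      _ = mm * (1-α*β) * |T| := by ring
  have hfo2 : |sy| *((1+α*β)*KT) ≤ |sy| * (mm*(1-α*β)* |T|) :=
    mul_le_mul_of_nonneg_left hfo hg
  have hso : KT^2 ≤ MM * Q := by
    rw [hKT]
    have e : (mm*c0*P)^2 = (mm^2 * c0^2) * P^2 := by ring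
    rw [e]
    have h3 : mm^2 * c0^2 ≤ MM := by
      nlinarith [sq_nonneg mm, mul_le_mul hc01 hc01 hc00 zero_le_one]
    have h4 : P^2 ≤ Q := by nlinarith [sq_abs T]
    calc (mm^2*c0^2) * P^2 ≤ MM * P^2 := mul_le_mul_of_nonneg_right h3 (sq_nonneg P)
      _ ≤ MM * Q := mul_le_mul_of_nonneg_left h4 hMM0
  have hso2 : ((1+α) * (aa/2)) * KT^2 ≤ ((1+α)*(aa/2))*(MM*Q) :=
    mul_le_mul_of_nonneg_left hso (mul_nonneg (by linarith) (by linarith))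
  have hts : -(mm * (β* |sy|) * |T|) ≤ mm*(ss*(-T)) := by
    have habs2 : |mm * (ss * (-T))| ≤ mm * (β* |sy|) * |T| := by
      rw [abs_mul, abs_mul, abs_neg, abs_of_nonneg hm0]
      have h5 : |ss| * |T| ≤ (β* |sy|)* |T| := mul_le_mul_of_nonneg_right h2 hT0
      nlinarith [h5, hm0]
    linarith [neg_abs_le (mm*(ss*(-T)))]
  have hyy : mm*(sy*(-T)) = mm * (|sy| * |T|) := by
    rw [show sy*(-T) = (-sy)*T from by ring, h1]
  have hss2 : α*(|ss| *KT) ≤ α*((β* |sy|)*KT) :=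
    mul_le_mul_of_nonneg_left (mul_le_mul_of_nonneg_right h2 hKT0) hα0.le
  have part1 : |sy| * KT + α*(|ss| *KT) ≤ mm*(sy*(-T)) + α*(mm*(ss*(-T))) := by
    have hts2 : α * (-(mm * (β* |sy|) * |T|)) ≤ α * (mm*(ss*(-T))) :=
      mul_le_mul_of_nonneg_left hts hα0.le
    calc |sy| * KT + α*(|ss| *KT)
        ≤ |sy| * KT + α*((β* |sy|)*KT) := by linarith [hss2]
      _ = |sy| * ((1+α*β)*KT) := by ring
      _ ≤ |sy| * (mm*(1-α*β)* |T|) := hfo2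
      _ = mm * (|sy| * |T|) + α * (-(mm * (β* |sy|) * |T|)) := by ring
      _ ≤ mm * (|sy| * |T|) + α * (mm*(ss*(-T))) := by linarith [hts2]
      _ = mm*(sy*(-T)) + α*(mm*(ss*(-T))) := by rw [hyy]
  linarith [part1, hso2]


lemma quad_lower {n : ℕ} (hn : 0 < n) (t : Fin n → ℝ) (i : Fin n)
    (hsum : ∑ j, t j = 0) :
    t i ^ 2 ≤ (1/(n:ℝ)) * ∑ j, (t j - t i)^2 := by
  have hn' : (0:ℝ) < n := by exact_mod_cast hn
  have e1 : ∑ j, (t j - t i)^2 = ∑ j, (t j^2 - 2 * t i * t j + t i^2) := by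
    apply Finset.sum_congr rfl; intro j _; ring
  have e2 : ∑ j, (t j^2 - 2 * t i * t j + t i^2)
      = (∑ j, t j^2) - 2 * t i * (∑ j, t j) + n * t i^2 := by
    rw [Finset.sum_add_distrib, Finset.sum_sub_distrib, ← Finset.mul_sum,
      Finset.sum_const, Finset.card_univ, Fintype.card_fin, nsmul_eq_mul]
  have hsq : (0:ℝ) ≤ ∑ j, t j^2 := Finset.sum_nonneg fun j _ => sq_nonneg _
  rw [e1, e2, hsum]
  have e3 : (1/(n:ℝ)) * ((∑ j, t j^2) - 2 * t i * 0 + n * t i^2)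
      = (1/(n:ℝ)) * (∑ j, t j^2) + t i^2 := by
    field_simp
    ring
  rw [e3]
  have h5 : 0 ≤ (1/(n:ℝ)) * (∑ j, t j^2) := by positivity
  linarith

end helpers

set_option maxHeartbeats 2000000 in
theorem stmt19 {d n : ℕ} (hd : 1 ≤ d) (hn : 0 < n)
    (θ : EuclideanSpace ℝ (Fin d)) (hθ : θ ≠ 0)
    (x : Fin n → EuclideanSpace ℝ (Fin d)) (y ystar : Fin n → ℝ)
    (α β cx : ℝ) (hα0 : 0 < α) (hα1 : α ≤ 1) (hβ : 0 ≤ β) (hαβ : α * β < 1)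
    (hcx : 0 < cx)
    (hcenter : ∑ i, x i = 0)
    (hy : ∀ i, y i = 0 ∨ y i = 1)
    (hsign : ∀ i, 0 ≤ (2 * y i - 1) * ⟪θ, x i⟫)
    (hteach : ∀ i, |ystar i - sigmoid ⟪θ, x i⟫| ≤ β * |y i - sigmoid ⟪θ, x i⟫|)
    (hnorm : ∀ i, cx * Real.sqrt d ≤ ‖x i‖) :
    -- abbreviations
    let σ : Fin n → ℝ := fun i => sigmoid ⟪θ, x i⟫
    let a : Fin n → ℝ := fun i => σ i * (1 - σ i)
    let R : ℝ := Finset.univ.inf' ⟨⟨0, hn⟩, Finset.mem_univ _⟩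
      (fun i => |⟪θ, x i⟫| / (‖θ‖ * ‖x i‖))
    let m : ℝ := ptildeExp α β (fun l => 1 - l)
    let M : ℝ := ptildeExp α β (fun l => (1 - l) ^ 2)
    let ε : ℝ := ((1 - α * β) / (1 + β)) * cx * R * m
    let xbar : EuclideanSpace ℝ (Fin d) := (1 / (n : ℝ)) • ∑ j, x j
    -- second-order adversarial surrogate
    let Atil : (Fin n → ℝ) → ℝ := fun z =>
      (1 / (n : ℝ)) * ∑ i, (softplus ⟪θ, x i⟫ - z i * ⟪θ, x i⟫ +
        sSup {r : ℝ | ∃ δ : EuclideanSpace ℝ (Fin d), ‖δ‖ ≤ ε * Real.sqrt d ∧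
          r = (σ i - z i) * ⟪θ, δ⟫ + (a i / 2) * ⟪θ, δ⟫ ^ 2})
    -- second-order mixup surrogate
    let Mtil : (Fin n → ℝ) → ℝ := fun z =>
      (1 / (n : ℝ)) * ∑ i, (softplus ⟪θ, x i⟫ - z i * ⟪θ, x i⟫) +
        m * ((1 / (n : ℝ)) * ∑ i, (σ i - z i) * ⟪θ, xbar - x i⟫) +
        M * ((1 / (2 * (n : ℝ))) * ∑ i, a i * ((1 / (n : ℝ)) * ∑ j, ⟪θ, x j - x i⟫ ^ 2))
    Atil y + α * Atil ystar ≤ Mtil y + α * Mtil ystar := by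
  intro σ a R m M ε xbar Atil Mtil
  -- basic positivity facts
  have hn' : (0:ℝ) < n := by exact_mod_cast hn
  have hd0 : (0:ℝ) < d := by exact_mod_cast Nat.lt_of_lt_of_le Nat.zero_lt_one hd
  have hsd : (0:ℝ) < Real.sqrt d := Real.sqrt_pos.2 hd0
  have hθn : (0:ℝ) < ‖θ‖ := norm_pos_iff.2 hθ
  have hxn : ∀ i, (0:ℝ) < ‖x i‖ := fun i => lt_of_lt_of_le (by positivity) (hnorm i)
  have hσb : ∀ i, 0 < σ i ∧ σ i < 1 := by
    intro i
    have h1 : (0:ℝ) < Real.exp (-⟪θ, x i⟫) := Real.exp_pos _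
    constructor
    · show 0 < 1 / (1 + Real.exp (-⟪θ, x i⟫)); positivity
    · show 1 / (1 + Real.exp (-⟪θ, x i⟫)) < 1
      rw [div_lt_one (by positivity)]; linarith
  have ha0 : ∀ i, 0 ≤ a i := fun i => by
    have := hσb i; exact mul_nonneg (this.1.le) (by linarith [this.2])
  have hmfacts := ptilde_facts (α := α) (β := β) hα0 hβ
  have hm0 : 0 ≤ m := hmfacts.1
  have hmM : m^2 ≤ M := hmfacts.2
  have hM0 : 0 ≤ M := le_trans (sq_nonneg m) hmM
  have hR0 : 0 ≤ R := Finset.le_inf' _ _ (fun i _ => div_nonneg (abs_nonneg _) (by positivity))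
  have hc0 : 0 ≤ (1 - α*β)/(1+β) := by
    apply div_nonneg <;> nlinarith
  have hc1 : (1 - α*β)/(1+β) ≤ 1 := by
    rw [div_le_one (by linarith)]; nlinarith
  have hc0a : ((1 - α*β)/(1+β)) * (1+α*β) ≤ 1 - α*β := by
    rw [div_mul_eq_mul_div, div_le_iff₀ (by linarith)]
    nlinarith [mul_nonneg (show (0:ℝ) ≤ 1 - α*β from by linarith)
      (mul_nonneg hβ (show (0:ℝ) ≤ 1-α from by linarith))]
  have hε0 : 0 ≤ ε := by
    show 0 ≤ ((1 - α * β) / (1 + β)) * cx * R * m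
    positivity
  have hKr0 : 0 ≤ ε * Real.sqrt d := by positivity
  have hxbar : xbar = 0 := by
    show (1 / (n : ℝ)) • ∑ j, x j = 0
    rw [hcenter, smul_zero]
  have hTsum : ∑ i, ⟪θ, x i⟫ = 0 := by
    rw [← inner_sum, hcenter, inner_zero_right]
  -- P : uniform lower bound for |⟪θ, x i⟫|
  set P : ℝ := cx * R * Real.sqrt d * ‖θ‖ with hPdef
  have hP0 : 0 ≤ P := by positivity
  have hPle : ∀ i, P ≤ |⟪θ, x i⟫| := by
    intro i
    have h1 : R ≤ |⟪θ, x i⟫| / (‖θ‖ * ‖x i‖) := Finset.inf'_le _ (Finset.mem_univ i)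
    have h2 : R * (‖θ‖ * ‖x i‖) ≤ |⟪θ, x i⟫| := by
      rw [← le_div_iff₀ (mul_pos hθn (hxn i))]; exact h1
    calc P = cx * Real.sqrt d * ‖θ‖ * R := by ring
      _ ≤ ‖x i‖ * ‖θ‖ * R := by
          apply mul_le_mul_of_nonneg_right (mul_le_mul_of_nonneg_right (hnorm i) hθn.le) hR0
      _ = R * (‖θ‖ * ‖x i‖) := by ring
      _ ≤ |⟪θ, x i⟫| := h2
  set KT : ℝ := ‖θ‖ * (ε * Real.sqrt d) with hKTdef
  have hKT0 : 0 ≤ KT := by positivity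
  have hKTP : KT = m * ((1 - α*β)/(1+β)) * P := by
    rw [hKTdef, hPdef]
    show ‖θ‖ * (((1 - α * β) / (1 + β)) * cx * R * m * Real.sqrt d) = _
    ring
  -- bound on the sup
  have hsup : ∀ (z : Fin n → ℝ) (i : Fin n),
      sSup {r : ℝ | ∃ δ : EuclideanSpace ℝ (Fin d), ‖δ‖ ≤ ε * Real.sqrt d ∧
        r = (σ i - z i) * ⟪θ, δ⟫ + (a i / 2) * ⟪θ, δ⟫ ^ 2}
      ≤ |σ i - z i| * KT + a i / 2 * KT^2 := by
    intro z i
    apply csSup_le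
    · exact ⟨(σ i - z i) * ⟪θ, (0:EuclideanSpace ℝ (Fin d))⟫ + (a i / 2) * ⟪θ, (0:EuclideanSpace ℝ (Fin d))⟫ ^ 2,
        ⟨0, by simpa using hKr0, rfl⟩⟩
    · rintro r ⟨δ, hδ, rfl⟩
      have h1 : |⟪θ, δ⟫| ≤ KT := by
        calc |⟪θ, δ⟫| ≤ ‖θ‖ * ‖δ‖ := abs_real_inner_le_norm θ δ
          _ ≤ KT := mul_le_mul_of_nonneg_left hδ hθn.le
      have h2 : ⟪θ, δ⟫^2 ≤ KT^2 := by
        rw [← sq_abs]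
        exact pow_le_pow_left₀ (abs_nonneg _) h1 2
      have h3 : (σ i - z i) * ⟪θ, δ⟫ ≤ |σ i - z i| * KT := by
        calc (σ i - z i) * ⟪θ, δ⟫ ≤ |(σ i - z i) * ⟪θ, δ⟫| := le_abs_self _
          _ = |σ i - z i| * |⟪θ, δ⟫| := abs_mul _ _
          _ ≤ |σ i - z i| * KT := mul_le_mul_of_nonneg_left h1 (abs_nonneg _)
      have h4 : (a i / 2) * ⟪θ, δ⟫^2 ≤ a i / 2 * KT^2 :=
        mul_le_mul_of_nonneg_left h2 (by linarith [ha0 i])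
      linarith
  -- quadratic lower bound
  have hQ : ∀ i, ⟪θ, x i⟫^2 ≤ (1/(n:ℝ)) * ∑ j, ⟪θ, x j - x i⟫^2 := by
    intro i
    have e0 : ∑ j, ⟪θ, x j - x i⟫^2 = ∑ j, (⟪θ, x j⟫ - ⟪θ, x i⟫)^2 := by
      apply Finset.sum_congr rfl
      intro j _
      rw [inner_sub_right]
    rw [e0]
    exact quad_lower hn (fun j => ⟪θ, x j⟫) i hTsum
  -- sign structure
  have habs : ∀ i, (y i - σ i) * ⟪θ, x i⟫ = |y i - σ i| * |⟪θ, x i⟫| := fun i =>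
    sign_abs (hy i) (hσb i).1 (hσb i).2 (hsign i)
  -- the per-index master inequality
  have hmaster : ∀ i,
      (|σ i - y i| * KT + a i / 2 * KT^2) + α * (|σ i - ystar i| * KT + a i / 2 * KT^2)
      ≤ m * ((σ i - y i) * (-⟪θ, x i⟫)) + (M/2) * (a i * ((1/(n:ℝ)) * ∑ j, ⟪θ, x j - x i⟫^2))
        + α * (m * ((σ i - ystar i) * (-⟪θ, x i⟫)) + (M/2) * (a i * ((1/(n:ℝ)) * ∑ j, ⟪θ, x j - x i⟫^2))) := by
    intro i
    have e1 : a i * ((1/(n:ℝ)) * ∑ j, ⟪θ, x j - x i⟫^2)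
        = a i * ((1/(n:ℝ)) * ∑ j, ⟪θ, x j - x i⟫^2) := rfl
    have h1 : (-(σ i - y i)) * ⟪θ, x i⟫ = |σ i - y i| * |⟪θ, x i⟫| := by
      rw [show -(σ i - y i) = y i - σ i from by ring, habs i, abs_sub_comm (σ i) (y i)]
    have h2 : |σ i - ystar i| ≤ β * |σ i - y i| := by
      rw [abs_sub_comm (σ i) (ystar i), abs_sub_comm (σ i) (y i)]
      exact hteach i
    exact master_real hα0 hα1 hβ hαβ hm0 hmM hc0 hc1 hc0a hKTP hP0 (hPle i) (hQ i) (ha0 i) h1 h2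
  -- assembling
  have hAle : ∀ z : Fin n → ℝ, Atil z ≤ (1/(n:ℝ)) * ∑ i,
      (softplus ⟪θ, x i⟫ - z i * ⟪θ, x i⟫ + (|σ i - z i| * KT + a i / 2 * KT^2)) := by
    intro z
    show (1 / (n : ℝ)) * ∑ i, (softplus ⟪θ, x i⟫ - z i * ⟪θ, x i⟫ +
        sSup {r : ℝ | ∃ δ : EuclideanSpace ℝ (Fin d), ‖δ‖ ≤ ε * Real.sqrt d ∧
          r = (σ i - z i) * ⟪θ, δ⟫ + (a i / 2) * ⟪θ, δ⟫ ^ 2}) ≤ _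
    refine mul_le_mul_of_nonneg_left (Finset.sum_le_sum ?_) (by positivity)
    intro i _
    exact add_le_add_right (hsup z i) _
  have hMeq : ∀ z : Fin n → ℝ, Mtil z = (1/(n:ℝ)) * ∑ i,
      (softplus ⟪θ, x i⟫ - z i * ⟪θ, x i⟫ + m * ((σ i - z i) * (-⟪θ, x i⟫))
        + (M/2) * (a i * ((1/(n:ℝ)) * ∑ j, ⟪θ, x j - x i⟫^2))) := by
    intro z
    show (1 / (n : ℝ)) * ∑ i, (softplus ⟪θ, x i⟫ - z i * ⟪θ, x i⟫) +
        m * ((1 / (n : ℝ)) * ∑ i, (σ i - z i) * ⟪θ, xbar - x i⟫) +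
        M * ((1 / (2 * (n : ℝ))) * ∑ i, a i * ((1 / (n : ℝ)) * ∑ j, ⟪θ, x j - x i⟫ ^ 2)) = _
    have hx0 : ∀ i : Fin n, (σ i - z i) * ⟪θ, xbar - x i⟫ = (σ i - z i) * (-⟪θ, x i⟫) := by
      intro i; rw [hxbar, zero_sub, inner_neg_right]
    rw [Finset.sum_congr rfl (fun i _ => hx0 i)]
    rw [Finset.sum_add_distrib, Finset.sum_add_distrib, ← Finset.mul_sum, ← Finset.mul_sum]
    ring
  have comb : ∀ (F G : Fin n → ℝ), (1/(n:ℝ)) * ∑ i, F i + α * ((1/(n:ℝ)) * ∑ i, G i)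
      = (1/(n:ℝ)) * ∑ i, (F i + α * G i) := by
    intro F G
    rw [Finset.sum_add_distrib, ← Finset.mul_sum]
    ring
  calc Atil y + α * Atil ystar
      ≤ (1/(n:ℝ)) * ∑ i, (softplus ⟪θ, x i⟫ - y i * ⟪θ, x i⟫ + (|σ i - y i| * KT + a i / 2 * KT^2))
        + α * ((1/(n:ℝ)) * ∑ i, (softplus ⟪θ, x i⟫ - ystar i * ⟪θ, x i⟫ + (|σ i - ystar i| * KT + a i / 2 * KT^2))) :=
        add_le_add (hAle y) (mul_le_mul_of_nonneg_left (hAle ystar) hα0.le)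
    _ ≤ Mtil y + α * Mtil ystar := by
        rw [hMeq y, hMeq ystar, comb, comb]
        refine mul_le_mul_of_nonneg_left (Finset.sum_le_sum ?_) (by positivity)
        intro i _
        linarith [hmaster i]
end
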